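/- arXiv:2207.13200 — 3 statements merged into one kernel-verified Lean document; each statement's English description precedes it below -/
import Mathlib

section
/- Assume λ < 1 and 0 < γ < (1−λ)τ/(L+(1+λ)τ)², and set η = sqrt(1 − 2γτ(1−λ) + γ²(L+(1+λ)τ)²). Then for every x ∈ E and every x* ∈ E with G(x*) = 0, one has ‖x − γ·Ĝ(x) − x*‖ ≤ η·‖x − x*‖ + γτσε. -/
/-!
Write `v = x - x*` and `u = G x - G x*`. Convexity of `g` makes `∇g` monotone, so
`G = ∇g + τ (I - D)` is `τ(1 - λ)`-strongly monotone and `(L + (1 + λ)τ)`-Lipschitz; expanding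
`‖v - γ u‖²` then gives `‖v - γ u‖ ≤ η ‖v‖`. Since `G x* = 0`, the mismatched step
`x - γ Ĝ x - x*` differs from `v - γ u` by `γ τ (D x - D̂ x)`, of norm at most `γ τ σ ε`.
-/

open InnerProductSpace RealInnerProductSpace

variable {F : Type*} [NormedAddCommGroup F] [InnerProductSpace ℝ F]

theorem ConvexOn.inner_gradient_sub_nonneg [CompleteSpace F] {f : F → ℝ} {f' : F → F}
    (hf : ConvexOn ℝ Set.univ f) (hgrad : ∀ x, HasGradientAt f (f' x) x) (x y : F) :
    0 ≤ ⟪f' x - f' y, x - y⟫ := by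
  have hφ : ConvexOn ℝ Set.univ (f ∘ AffineMap.lineMap (k := ℝ) y x) := by
    simpa using hf.comp_affineMap (AffineMap.lineMap (k := ℝ) y x)
  have hφ' (t : ℝ) : HasDerivAt (f ∘ AffineMap.lineMap (k := ℝ) y x)
      ⟪f' (AffineMap.lineMap y x t), x - y⟫ t :=
    (hgrad _).hasFDerivAt.comp_hasDerivAt t AffineMap.hasDerivAt_lineMap
  have hmono := (hφ.le_slope_of_hasDerivAt trivial trivial one_pos (hφ' 0)).trans
    (hφ.slope_le_of_hasDerivAt trivial trivial one_pos (hφ' 1))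
  simp only [AffineMap.lineMap_apply_zero, AffineMap.lineMap_apply_one] at hmono
  rw [inner_sub_left]
  linarith

/-- The paper's `G`, with `A = ∇g`. -/
def redOperator (A D : F → F) (τ : ℝ) (x : F) : F := A x + τ • (x - D x)

section redOperator

variable {A D : F → F} {τ lam : ℝ}

theorem redOperator_sub_redOperator (D' : F → F) (x : F) :
    redOperator A D' τ x - redOperator A D τ x = τ • (D x - D' x) := by
  simp only [redOperator]
  module

theorem redOperator_sub (x y : F) :
    redOperator A D τ x - redOperator A D τ y = (A x - A y) + τ • ((x - y) - (D x - D y)) := by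
  simp only [redOperator]
  module

theorem le_inner_redOperator_sub (hA : ∀ x y, 0 ≤ ⟪A x - A y, x - y⟫)
    (hD : ∀ x y, ‖D x - D y‖ ≤ lam * ‖x - y‖) (hτ : 0 ≤ τ) (x y : F) :
    τ * (1 - lam) * ‖x - y‖ ^ 2 ≤ ⟪redOperator A D τ x - redOperator A D τ y, x - y⟫ := by
  have hDxy : ⟪D x - D y, x - y⟫ ≤ lam * ‖x - y‖ ^ 2 := calc
    ⟪D x - D y, x - y⟫ ≤ ‖D x - D y‖ * ‖x - y‖ := real_inner_le_norm _ _
    _ ≤ lam * ‖x - y‖ * ‖x - y‖ := by gcongr; exact hD x y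
    _ = lam * ‖x - y‖ ^ 2 := by ring
  rw [redOperator_sub, inner_add_left, real_inner_smul_left, inner_sub_left (x - y),
    real_inner_self_eq_norm_sq]
  nlinarith [hA x y]

theorem norm_redOperator_sub_le {L : ℝ} (hA : ∀ x y, ‖A x - A y‖ ≤ L * ‖x - y‖)
    (hD : ∀ x y, ‖D x - D y‖ ≤ lam * ‖x - y‖) (hτ : 0 ≤ τ) (x y : F) :
    ‖redOperator A D τ x - redOperator A D τ y‖ ≤ (L + (1 + lam) * τ) * ‖x - y‖ := by
  calc ‖redOperator A D τ x - redOperator A D τ y‖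
      ≤ ‖A x - A y‖ + τ * (‖x - y‖ + ‖D x - D y‖) := by
        rw [redOperator_sub]
        refine (norm_add_le _ _).trans (add_le_add le_rfl ?_)
        rw [norm_smul, Real.norm_of_nonneg hτ]
        gcongr
        exact norm_sub_le _ _
    _ ≤ L * ‖x - y‖ + τ * (‖x - y‖ + lam * ‖x - y‖) := by
        gcongr
        exacts [hA x y, hD x y]
    _ = (L + (1 + lam) * τ) * ‖x - y‖ := by ring

end redOperator

theorem norm_sub_smul_le_sqrt_mul_norm {u v : F} {γ m K : ℝ} (hγ : 0 ≤ γ)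
    (hm : m * ‖v‖ ^ 2 ≤ ⟪u, v⟫) (hK : ‖u‖ ≤ K * ‖v‖) :
    ‖v - γ • u‖ ≤ √(1 - 2 * γ * m + γ ^ 2 * K ^ 2) * ‖v‖ := by
  have hK2 : ‖u‖ ^ 2 ≤ K ^ 2 * ‖v‖ ^ 2 := by
    rw [← mul_pow]
    exact pow_le_pow_left₀ (norm_nonneg u) hK 2
  have hsq : ‖v - γ • u‖ ^ 2 ≤ (1 - 2 * γ * m + γ ^ 2 * K ^ 2) * ‖v‖ ^ 2 := by
    rw [norm_sub_sq_real, inner_smul_right, real_inner_comm, norm_smul, Real.norm_of_nonneg hγ]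
    nlinarith [mul_le_mul_of_nonneg_left hm hγ, mul_le_mul_of_nonneg_left hK2 (sq_nonneg γ)]
  rw [← Real.sqrt_sq (norm_nonneg v), ← Real.sqrt_mul' _ (sq_nonneg _),
    ← Real.sqrt_sq (norm_nonneg (v - γ • u))]
  exact Real.sqrt_le_sqrt hsq

theorem sdred_one_step_contraction_general {n : ℕ}
    (g : EuclideanSpace ℝ (Fin n) → ℝ)
    (g' D Dh G Gh : EuclideanSpace ℝ (Fin n) → EuclideanSpace ℝ (Fin n))
    (L lam σ ε τ γ η : ℝ)
    (hgconv : ConvexOn ℝ Set.univ g)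
    (hgrad : ∀ x, HasGradientAt g (g' x) x)
    (hgLip : ∀ x y, ‖g' x - g' y‖ ≤ L * ‖x - y‖)
    (hD : ∀ x y, ‖D x - D y‖ ≤ lam * ‖x - y‖)
    (hmis : ∀ x, ‖Dh x - D x‖ ≤ σ * ε)
    (hτ : 0 < τ)
    (hG : ∀ x, G x = g' x + τ • (x - D x))
    (hGh : ∀ x, Gh x = g' x + τ • (x - Dh x))
    (hγ0 : 0 < γ)
    (hη : η = Real.sqrt (1 - 2 * γ * τ * (1 - lam) + γ ^ 2 * (L + (1 + lam) * τ) ^ 2)) :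
    ∀ x xstar : EuclideanSpace ℝ (Fin n), G xstar = 0 →
      ‖x - γ • Gh x - xstar‖ ≤ η * ‖x - xstar‖ + γ * τ * σ * ε := by
  intro x xstar hstar
  obtain rfl : G = redOperator g' D τ := funext hG
  obtain rfl : Gh = redOperator g' Dh τ := funext hGh
  have hstep : ‖(x - xstar) - γ • (redOperator g' D τ x - redOperator g' D τ xstar)‖
      ≤ η * ‖x - xstar‖ := by
    rw [hη, mul_assoc (2 * γ) τ]
    exact norm_sub_smul_le_sqrt_mul_norm hγ0.le
      (le_inner_redOperator_sub (hgconv.inner_gradient_sub_nonneg hgrad) hD hτ.le x xstar)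
      (norm_redOperator_sub_le hgLip hD hτ.le x xstar)
  have hmismatch : ‖(γ * τ) • (D x - Dh x)‖ ≤ γ * τ * (σ * ε) := by
    rw [norm_smul, Real.norm_of_nonneg (by positivity), norm_sub_rev]
    exact mul_le_mul_of_nonneg_left (hmis x) (by positivity)
  have hdecomp : x - γ • redOperator g' Dh τ x - xstar
      = ((x - xstar) - γ • (redOperator g' D τ x - redOperator g' D τ xstar))
        - (γ * τ) • (D x - Dh x) := by
    rw [hstar, sub_zero, mul_smul, ← redOperator_sub_redOperator Dh x]
    module
  calc ‖x - γ • redOperator g' Dh τ x - xstar‖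
      ≤ η * ‖x - xstar‖ + γ * τ * (σ * ε) :=
        hdecomp ▸ (norm_sub_le _ _).trans (add_le_add hstep hmismatch)
    _ = η * ‖x - xstar‖ + γ * τ * σ * ε := by ring

/-- One mismatched SD-RED step under a contractive true prior is a contraction
towards any zero of `G` up to an additive error `γτσε`. -/
theorem sdred_one_step_contraction {n : ℕ}
    (g : EuclideanSpace ℝ (Fin n) → ℝ)
    (g' D Dh G Gh : EuclideanSpace ℝ (Fin n) → EuclideanSpace ℝ (Fin n))
    (L lam σ ε τ γ η : ℝ)
    (hL : 0 < L)
    (hgconv : ConvexOn ℝ Set.univ g)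
    (hgrad : ∀ x, HasGradientAt g (g' x) x)
    (hgLip : ∀ x y, ‖g' x - g' y‖ ≤ L * ‖x - y‖)
    (hlam0 : 0 < lam) (hlam1 : lam < 1)
    (hD : ∀ x y, ‖D x - D y‖ ≤ lam * ‖x - y‖)
    (hσ : 0 < σ) (hε : 0 < ε)
    (hmis : ∀ x, ‖Dh x - D x‖ ≤ σ * ε)
    (hτ : 0 < τ)
    (hG : ∀ x, G x = g' x + τ • (x - D x))
    (hGh : ∀ x, Gh x = g' x + τ • (x - Dh x))
    (hγ0 : 0 < γ) (hγ : γ < (1 - lam) * τ / (L + (1 + lam) * τ) ^ 2)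
    (hη : η = Real.sqrt (1 - 2 * γ * τ * (1 - lam) + γ ^ 2 * (L + (1 + lam) * τ) ^ 2)) :
    ∀ x xstar : EuclideanSpace ℝ (Fin n), G xstar = 0 →
      ‖x - γ • Gh x - xstar‖ ≤ η * ‖x - xstar‖ + γ * τ * σ * ε :=
  sdred_one_step_contraction_general g g' D Dh G Gh L lam σ ε τ γ η hgconv hgrad hgLip hD hmis hτ hG
    hGh hγ0 hη
end

section
/- Let h : E → ℝ be convex and continuous, σ > 0, τ = 1/σ², and let f_{σ²} = g + τ·h_{σ²} where h_{σ²}(x) = inf_{v} { (1/2)‖v − x‖² + σ²·h(v) }. Take the true prior D = prox_{σ²h} and suppose D̂ : E → E satisfies ‖D̂(x) − prox_{σ²h}(x)‖ ≤ σε for all x, with Ĝ(x) = ∇g(x) + τ(x − D̂(x)). Then for any step size 0 < γ ≤ 1/(L+2τ) and any x ∈ E, the point x⁺ = x − γ·Ĝ(x) satisfies f_{σ²}(x⁺) ≤ f_{σ²}(x) − (γ/2)·‖∇f_{σ²}(x)‖² + (γ/2)·τ²σ²ε². -/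
/-!
Both summands of `f_{σ²} = g + τ • h_{σ²}` lie below a quadratic model at `x`: `g` because its
gradient is `L`-Lipschitz (with slope `∇g x` and curvature `L`), and the Moreau envelope `h_{σ²}`
because testing its infimum at `y` with `v = prox x` gives slope `x - prox x` and curvature `1`.
So `f_{σ²}` lies below the model with slope `∇f_{σ²}(x) = ∇g x + τ (x - prox x)` and curvature
`L + τ`. For any `Ĝ` and `γ (L + τ) ≤ 1`, evaluating the model at `x - γ Ĝ` and completing the
square yields `f(x - γ Ĝ) ≤ f x - γ/2 ‖∇f x‖² + γ/2 ‖Ĝ - ∇f x‖²`, and here `Ĝ - ∇f x = τ (prox x - D̂ x)`.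
-/

open Set
open scoped RealInnerProductSpace

variable {E : Type*} [NormedAddCommGroup E]

noncomputable def moreauEnvelope (c : E → ℝ) (z : E) : ℝ :=
  ⨅ v, 1 / 2 * ‖v - z‖ ^ 2 + c v

theorem moreauEnvelope_eq_of_isMinOn {c : E → ℝ} {z p : E}
    (hp : IsMinOn (fun v => 1 / 2 * ‖v - z‖ ^ 2 + c v) univ p) :
    moreauEnvelope c z = 1 / 2 * ‖p - z‖ ^ 2 + c p :=
  le_antisymm (ciInf_le ⟨_, forall_mem_range.2 fun v => hp (mem_univ v)⟩ p)
    (le_ciInf fun v => hp (mem_univ v))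

theorem moreauEnvelope_le_of_isMinOn {c : E → ℝ} {z p : E}
    (hp : IsMinOn (fun v => 1 / 2 * ‖v - z‖ ^ 2 + c v) univ p) (v : E) :
    moreauEnvelope c z ≤ 1 / 2 * ‖v - z‖ ^ 2 + c v :=
  (moreauEnvelope_eq_of_isMinOn hp).trans_le (hp (mem_univ v))

variable [InnerProductSpace ℝ E]

def HasQuadraticUpperBound (f : E → ℝ) (x G : E) (M : ℝ) : Prop :=
  ∀ y, f y ≤ f x + ⟪G, y - x⟫ + M / 2 * ‖y - x‖ ^ 2

namespace HasQuadraticUpperBound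

theorem add {f g : E → ℝ} {x F G : E} {M N : ℝ}
    (hf : HasQuadraticUpperBound f x F M) (hg : HasQuadraticUpperBound g x G N) :
    HasQuadraticUpperBound (fun z => f z + g z) x (F + G) (M + N) := fun y => by
  have := add_le_add (hf y) (hg y)
  rw [inner_add_left]
  linarith

theorem const_mul {f : E → ℝ} {x G : E} {M c : ℝ}
    (hf : HasQuadraticUpperBound f x G M) (hc : 0 ≤ c) :
    HasQuadraticUpperBound (fun z => c * f z) x (c • G) (c * M) := fun y => by
  have := mul_le_mul_of_nonneg_left (hf y) hc
  rw [real_inner_smul_left]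
  linarith

theorem apply_sub_smul_le {f : E → ℝ} {x G : E} {M γ : ℝ}
    (hf : HasQuadraticUpperBound f x G M) (hγ : 0 ≤ γ) (hγM : γ * M ≤ 1) (Ĝ : E) :
    f (x - γ • Ĝ) ≤ f x - γ / 2 * ‖G‖ ^ 2 + γ / 2 * ‖Ĝ - G‖ ^ 2 := by
  have hmodel := hf (x - γ • Ĝ)
  rw [sub_sub_cancel_left, inner_neg_right, real_inner_smul_right, norm_neg, norm_smul,
    Real.norm_of_nonneg hγ] at hmodel
  have hcurv : M / 2 * (γ * ‖Ĝ‖) ^ 2 ≤ γ / 2 * ‖Ĝ‖ ^ 2 := by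
    nlinarith [mul_nonneg (mul_nonneg hγ (sq_nonneg ‖Ĝ‖)) (sub_nonneg.2 hγM)]
  rw [norm_sub_sq_real, real_inner_comm]
  linarith

end HasQuadraticUpperBound

theorem hasQuadraticUpperBound_of_lipschitz_gradient [CompleteSpace E] {f : E → ℝ}
    {f' : E → E} {L : ℝ} (hf : ∀ x, HasGradientAt f (f' x) x)
    (hf' : ∀ x y, ‖f' x - f' y‖ ≤ L * ‖x - y‖) (x : E) :
    HasQuadraticUpperBound f x (f' x) L := by
  intro y
  set d := y - x
  have hline : ∀ t : ℝ, HasDerivAt (fun t : ℝ => f (x + t • d)) ⟪f' (x + t • d), d⟫ t :=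
    fun t => (hf _).hasFDerivAt.comp_hasDerivAt t
      (by simpa using ((hasDerivAt_id t).smul_const d).const_add x)
  have hmodel : ∀ t : ℝ, HasDerivAt (fun t : ℝ => f x + t * ⟪f' x, d⟫ + L / 2 * t ^ 2 * ‖d‖ ^ 2)
      (⟪f' x, d⟫ + L * t * ‖d‖ ^ 2) t := fun t =>
    ((((hasDerivAt_id t).mul_const ⟪f' x, d⟫).const_add (f x)).add
      (((hasDerivAt_pow 2 t).const_mul (L / 2)).mul_const (‖d‖ ^ 2))).congr_deriv
      (by rw [Nat.cast_ofNat, Nat.add_one_sub_one, pow_one]; ring)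
  have hslope : ∀ t : ℝ, 0 ≤ t → ⟪f' (x + t • d), d⟫ ≤ ⟪f' x, d⟫ + L * t * ‖d‖ ^ 2 := by
    intro t ht
    calc ⟪f' (x + t • d), d⟫ = ⟪f' x, d⟫ + ⟪f' (x + t • d) - f' x, d⟫ := by
          rw [inner_sub_left]; ring
      _ ≤ ⟪f' x, d⟫ + ‖f' (x + t • d) - f' x‖ * ‖d‖ := by gcongr; exact real_inner_le_norm _ _
      _ ≤ ⟪f' x, d⟫ + L * ‖t • d‖ * ‖d‖ := by gcongr; simpa using hf' (x + t • d) x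
      _ = ⟪f' x, d⟫ + L * t * ‖d‖ ^ 2 := by rw [norm_smul, Real.norm_of_nonneg ht]; ring
  have hend := image_le_of_deriv_right_le_deriv_boundary (a := 0) (b := 1)
    (fun t _ => (hline t).continuousAt.continuousWithinAt) (fun t _ => (hline t).hasDerivWithinAt)
    (by simp) (fun t _ => (hmodel t).continuousAt.continuousWithinAt)
    (fun t _ => (hmodel t).hasDerivWithinAt) (fun t ht => hslope t ht.1)
    (right_mem_Icc.2 zero_le_one)
  simpa [d] using hend

theorem moreauEnvelope_hasQuadraticUpperBound {c : E → ℝ} {prox : E → E}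
    (hprox : ∀ z, IsMinOn (fun v => 1 / 2 * ‖v - z‖ ^ 2 + c v) univ (prox z)) (x : E) :
    HasQuadraticUpperBound (moreauEnvelope c) x (x - prox x) 1 := fun y => by
  have hy := moreauEnvelope_le_of_isMinOn (hprox y) (prox x)
  rw [show prox x - y = -((x - prox x) + (y - x)) by abel, norm_neg, norm_add_sq_real] at hy
  rw [moreauEnvelope_eq_of_isMinOn (hprox x), norm_sub_rev]
  linarith

theorem sdred_step_smoothed_descent_general {n : ℕ}
    (g h : EuclideanSpace ℝ (Fin n) → ℝ)
    (g' prox Dh Gh : EuclideanSpace ℝ (Fin n) → EuclideanSpace ℝ (Fin n))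
    (L σ ε τ γ : ℝ)
    (hgrad : ∀ x, HasGradientAt g (g' x) x)
    (hgLip : ∀ x y, ‖g' x - g' y‖ ≤ L * ‖x - y‖)
    (hτ : τ = 1 / σ ^ 2)
    (hprox : ∀ x, IsMinOn (fun v => (1 / 2) * ‖v - x‖ ^ 2 + σ ^ 2 * h v)
      Set.univ (prox x))
    (hmis : ∀ x, ‖Dh x - prox x‖ ≤ σ * ε)
    (hGh : ∀ x, Gh x = g' x + τ • (x - Dh x))
    (hγ0 : 0 < γ) (hγ : γ ≤ 1 / (L + 2 * τ))
    (x : EuclideanSpace ℝ (Fin n)) :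
    (fun z : EuclideanSpace ℝ (Fin n) =>
        g z + τ * ⨅ v : EuclideanSpace ℝ (Fin n),
          ((1 / 2) * ‖v - z‖ ^ 2 + σ ^ 2 * h v)) (x - γ • Gh x)
      ≤ (fun z : EuclideanSpace ℝ (Fin n) =>
          g z + τ * ⨅ v : EuclideanSpace ℝ (Fin n),
            ((1 / 2) * ‖v - z‖ ^ 2 + σ ^ 2 * h v)) x
        - (γ / 2) * ‖g' x + τ • (x - prox x)‖ ^ 2
        + (γ / 2) * τ ^ 2 * σ ^ 2 * ε ^ 2 := by
  have hτ0 : 0 ≤ τ := hτ ▸ by positivity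
  have hstep : γ * (L + τ * 1) ≤ 1 := by
    rcases le_or_gt (L + 2 * τ) 0 with hneg | hpos
    · nlinarith [mul_nonpos_of_nonneg_of_nonpos hγ0.le hneg, mul_nonneg hγ0.le hτ0]
    · nlinarith [(le_div_iff₀ hpos).1 hγ, mul_nonneg hγ0.le hτ0]
  have hsmooth := (hasQuadraticUpperBound_of_lipschitz_gradient hgrad hgLip x).add
    ((moreauEnvelope_hasQuadraticUpperBound (c := fun v => σ ^ 2 * h v) hprox x).const_mul hτ0)
  have herr : ‖Gh x - (g' x + τ • (x - prox x))‖ ≤ τ * (σ * ε) := by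
    rw [hGh, show g' x + τ • (x - Dh x) - (g' x + τ • (x - prox x)) = τ • (prox x - Dh x) by
      module, norm_smul, Real.norm_of_nonneg hτ0, norm_sub_rev]
    exact mul_le_mul_of_nonneg_left (hmis x) hτ0
  refine (hsmooth.apply_sub_smul_le hγ0.le hstep (Gh x)).trans (add_le_add le_rfl ?_)
  calc γ / 2 * ‖Gh x - (g' x + τ • (x - prox x))‖ ^ 2 ≤ γ / 2 * (τ * (σ * ε)) ^ 2 := by gcongr
    _ = γ / 2 * τ ^ 2 * σ ^ 2 * ε ^ 2 := by ring

/-- A single mismatched SD-RED step decreases the smoothed objective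
`f_{σ²} = g + τ·h_{σ²}` up to the error term `(γ/2)·τ²σ²ε²`. -/
theorem sdred_step_smoothed_descent {n : ℕ}
    (g h : EuclideanSpace ℝ (Fin n) → ℝ)
    (g' prox Dh Gh : EuclideanSpace ℝ (Fin n) → EuclideanSpace ℝ (Fin n))
    (L σ ε τ γ : ℝ)
    (hL : 0 < L)
    (hgconv : ConvexOn ℝ Set.univ g)
    (hgrad : ∀ x, HasGradientAt g (g' x) x)
    (hgLip : ∀ x y, ‖g' x - g' y‖ ≤ L * ‖x - y‖)
    (hhconv : ConvexOn ℝ Set.univ h) (hhcont : Continuous h)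
    (hσ : 0 < σ) (hε : 0 < ε) (hτ : τ = 1 / σ ^ 2)
    (hprox : ∀ x, IsMinOn (fun v => (1 / 2) * ‖v - x‖ ^ 2 + σ ^ 2 * h v)
      Set.univ (prox x))
    (hmis : ∀ x, ‖Dh x - prox x‖ ≤ σ * ε)
    (hGh : ∀ x, Gh x = g' x + τ • (x - Dh x))
    (hγ0 : 0 < γ) (hγ : γ ≤ 1 / (L + 2 * τ))
    (x : EuclideanSpace ℝ (Fin n)) :
    (fun z : EuclideanSpace ℝ (Fin n) =>
        g z + τ * ⨅ v : EuclideanSpace ℝ (Fin n),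
          ((1 / 2) * ‖v - z‖ ^ 2 + σ ^ 2 * h v)) (x - γ • Gh x)
      ≤ (fun z : EuclideanSpace ℝ (Fin n) =>
          g z + τ * ⨅ v : EuclideanSpace ℝ (Fin n),
            ((1 / 2) * ‖v - z‖ ^ 2 + σ ^ 2 * h v)) x
        - (γ / 2) * ‖g' x + τ • (x - prox x)‖ ^ 2
        + (γ / 2) * τ ^ 2 * σ ^ 2 * ε ^ 2 :=
  sdred_step_smoothed_descent_general g h g' prox Dh Gh L σ ε τ γ hgrad hgLip hτ hprox hmis hGh hγ0
    hγ x
end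

section
/- Assume D is nonexpansive (λ = 1). Then G = ∇g + τ(I − D) is (1/(L+2τ))-cocoercive: for all x, y ∈ E, ⟨G(x) − G(y), x − y⟩ ≥ (1/(L+2τ))·‖G(x) − G(y)‖². -/
/-!
The operator `G = ∇g + τ (I - D)` is a sum of two cocoercive operators. By the Baillon–Haddad
theorem, the gradient of a convex function with `L`-Lipschitz gradient is `1/L`-cocoercive; for a
nonexpansive `D`, expanding `‖(x - y) - (D x - D y)‖²` shows that `I - D` is `1/2`-cocoercive, so
`τ (I - D)` is `1/(2τ)`-cocoercive. Sums of `α`- and `β`-cocoercive operators are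
`αβ/(α+β)`-cocoercive, which gives the constant `1/(L + 2τ)`.
-/

open scoped RealInnerProductSpace

section Cocoercive

variable {E : Type*} [NormedAddCommGroup E] [InnerProductSpace ℝ E]

def Cocoercive (β : ℝ) (T : E → E) : Prop :=
  ∀ x y, β * ‖T x - T y‖ ^ 2 ≤ ⟪T x - T y, x - y⟫

theorem Cocoercive.smul {β c : ℝ} {T : E → E} (hT : Cocoercive β T) (hc : 0 ≤ c) :
    Cocoercive (β / c) (c • T) := by
  intro x y
  rcases hc.eq_or_lt with rfl | hc
  · simp
  have hxy := hT x y
  calc β / c * ‖(c • T) x - (c • T) y‖ ^ 2 = c * (β * ‖T x - T y‖ ^ 2) := by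
        rw [Pi.smul_apply, Pi.smul_apply, ← smul_sub, norm_smul, Real.norm_of_nonneg hc.le]
        field_simp
    _ ≤ c * ⟪T x - T y, x - y⟫ := by gcongr
    _ = ⟪(c • T) x - (c • T) y, x - y⟫ := by
        rw [Pi.smul_apply, Pi.smul_apply, ← smul_sub, real_inner_smul_left]

theorem Cocoercive.add {α β : ℝ} {S T : E → E} (hS : Cocoercive α S) (hT : Cocoercive β T)
    (hα : 0 ≤ α) (hβ : 0 ≤ β) : Cocoercive (α * β / (α + β)) (S + T) := by
  intro x y
  set a := S x - S y
  set b := T x - T y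
  have hab : (S + T) x - (S + T) y = a + b := by simp only [Pi.add_apply, a, b]; abel
  rw [hab, inner_add_left]
  rcases (add_nonneg hα hβ).eq_or_lt with hαβ | hαβ
  · simp only [← hαβ, div_zero, zero_mul]
    linarith [hS x y, hT x y, mul_nonneg hα (sq_nonneg ‖a‖), mul_nonneg hβ (sq_nonneg ‖b‖)]
  -- `(α + β) (α p² + β q²) - α β (p + q)² = (α p - β q)²`
  have hsplit : α * β * (‖a‖ + ‖b‖) ^ 2 ≤ (α + β) * (α * ‖a‖ ^ 2 + β * ‖b‖ ^ 2) := by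
    nlinarith [sq_nonneg (α * ‖a‖ - β * ‖b‖)]
  calc α * β / (α + β) * ‖a + b‖ ^ 2 ≤ α * β / (α + β) * (‖a‖ + ‖b‖) ^ 2 := by
        gcongr
        exact norm_add_le a b
    _ ≤ α * ‖a‖ ^ 2 + β * ‖b‖ ^ 2 := by
        rw [div_mul_eq_mul_div, div_le_iff₀ hαβ]
        linarith
    _ ≤ ⟪a, x - y⟫ + ⟪b, x - y⟫ := add_le_add (hS x y) (hT x y)

theorem cocoercive_id_sub_of_nonexpansive {D : E → E} (hD : ∀ x y, ‖D x - D y‖ ≤ ‖x - y‖) :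
    Cocoercive (1 / 2) (fun x => x - D x) := by
  intro x y
  set u := x - y
  set m := D x - D y
  have hw : x - D x - (y - D y) = u - m := by simp only [u, m]; abel
  rw [hw, inner_sub_left, real_inner_self_eq_norm_sq, norm_sub_sq_real, real_inner_comm m u]
  nlinarith [hD x y, norm_nonneg m]

end Cocoercive

section Gradient

variable {E : Type*} [NormedAddCommGroup E] [InnerProductSpace ℝ E] [CompleteSpace E]
  {g : E → ℝ}

theorem HasGradientAt.hasDerivAt_comp_add_smul {g' x v : E} {t : ℝ}
    (h : HasGradientAt g g' (x + t • v)) :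
    HasDerivAt (fun s : ℝ => g (x + s • v)) ⟪g', v⟫ t := by
  have hline : HasDerivAt (fun s : ℝ => x + s • v) v t := by
    simpa using ((hasDerivAt_id t).smul_const v).const_add x
  have hcomp := (hasGradientAt_iff_hasFDerivAt.mp h).comp_hasDerivAt t hline
  simp only [InnerProductSpace.toDual_apply_apply] at hcomp
  exact hcomp

theorem ConvexOn.add_inner_gradient_le (hg : ConvexOn ℝ Set.univ g) {g' x : E}
    (h : HasGradientAt g g' x) (y : E) : g x + ⟪g', y - x⟫ ≤ g y := by
  set φ : ℝ → ℝ := fun s => g (x + s • (y - x))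
  have hφ : ConvexOn ℝ Set.univ φ := by
    have hline : φ = g ∘ AffineMap.lineMap x y := by
      funext s
      simp [φ, AffineMap.lineMap_apply, add_comm]
    simpa [hline] using hg.comp_affineMap (AffineMap.lineMap x y)
  have hφ' : HasDerivAt φ ⟪g', y - x⟫ 0 :=
    HasGradientAt.hasDerivAt_comp_add_smul (by simpa using h)
  have := hφ.le_slope_of_hasDerivAt (Set.mem_univ 0) (Set.mem_univ 1) one_pos hφ'
  simp only [slope_def_field, one_smul, add_sub_cancel, zero_smul, add_zero, sub_zero, div_one, φ]
    at this
  linarith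

theorem le_add_inner_gradient_add_sq {g' : E → E} {L : ℝ}
    (hgrad : ∀ x, HasGradientAt g (g' x) x) (hLip : ∀ x y, ‖g' x - g' y‖ ≤ L * ‖x - y‖)
    (x v : E) : g (x + v) ≤ g x + ⟪g' x, v⟫ + L / 2 * ‖v‖ ^ 2 := by
  set θ : ℝ → ℝ := fun t => g (x + t • v) - t * ⟪g' x, v⟫ - L / 2 * ‖v‖ ^ 2 * t ^ 2
  have hθ : ∀ t, HasDerivAt θ (⟪g' (x + t • v) - g' x, v⟫ - L * ‖v‖ ^ 2 * t) t := by
    intro t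
    have hlin : HasDerivAt (fun t : ℝ => t * ⟪g' x, v⟫) ⟪g' x, v⟫ t := by
      simpa using (hasDerivAt_id t).mul_const ⟪g' x, v⟫
    have hquad : HasDerivAt (fun t : ℝ => L / 2 * ‖v‖ ^ 2 * t ^ 2) (L * ‖v‖ ^ 2 * t) t :=
      ((hasDerivAt_pow 2 t).const_mul (L / 2 * ‖v‖ ^ 2)).congr_deriv (by norm_num; ring)
    rw [inner_sub_left]
    exact ((hgrad (x + t • v)).hasDerivAt_comp_add_smul.sub hlin).sub hquad
  have hθ_nonpos : ∀ t ∈ interior (Set.Icc (0 : ℝ) 1),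
      ⟪g' (x + t • v) - g' x, v⟫ - L * ‖v‖ ^ 2 * t ≤ 0 := by
    intro t ht
    rw [interior_Icc] at ht
    refine sub_nonpos.2 ?_
    have hstep : ‖g' (x + t • v) - g' x‖ ≤ L * (t * ‖v‖) := by
      simpa [norm_smul, abs_of_pos ht.1] using hLip (x + t • v) x
    calc ⟪g' (x + t • v) - g' x, v⟫ ≤ ‖g' (x + t • v) - g' x‖ * ‖v‖ := real_inner_le_norm _ _
      _ ≤ L * (t * ‖v‖) * ‖v‖ := by gcongr
      _ = L * ‖v‖ ^ 2 * t := by ring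
  have hanti : AntitoneOn θ (Set.Icc 0 1) :=
    antitoneOn_of_hasDerivWithinAt_nonpos (convex_Icc 0 1)
      (fun t _ => (hθ t).continuousAt.continuousWithinAt) (fun t _ => (hθ t).hasDerivWithinAt)
      hθ_nonpos
  have := hanti (Set.left_mem_Icc.2 zero_le_one) (Set.right_mem_Icc.2 zero_le_one) zero_le_one
  simp only [one_smul, one_mul, one_pow, mul_one, zero_smul, add_zero, zero_mul, sub_zero,
    ne_eq, OfNat.ofNat_ne_zero, not_false_eq_true, zero_pow, mul_zero, tsub_le_iff_right, θ] at this
  linarith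

end Gradient

section BaillonHaddad

variable {E : Type*} [NormedAddCommGroup E] [InnerProductSpace ℝ E] [CompleteSpace E]
  {g : E → ℝ} {g' : E → E} {L : ℝ}

theorem ConvexOn.add_inner_gradient_add_sq_le (hg : ConvexOn ℝ Set.univ g) (hL : 0 < L)
    (hgrad : ∀ x, HasGradientAt g (g' x) x) (hLip : ∀ x y, ‖g' x - g' y‖ ≤ L * ‖x - y‖)
    (x y : E) : g y + ⟪g' y, x - y⟫ + 1 / (2 * L) * ‖g' x - g' y‖ ^ 2 ≤ g x := by
  set d := g' x - g' y
  -- a gradient step from `x` decreases `g` by `‖d‖² / 2L`, but stays above the tangent at `y`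
  have hdesc := le_add_inner_gradient_add_sq hgrad hLip x (-L⁻¹ • d)
  have htan := hg.add_inner_gradient_le (hgrad y) (x + -L⁻¹ • d)
  have hd : L⁻¹ * ⟪g' x, d⟫ - L⁻¹ * ⟪g' y, d⟫ = 2 * (1 / (2 * L) * ‖d‖ ^ 2) := by
    rw [← mul_sub, ← inner_sub_left]
    change L⁻¹ * ⟪d, d⟫ = _
    rw [real_inner_self_eq_norm_sq]
    field_simp
  rw [show x + -L⁻¹ • d - y = (x - y) + -L⁻¹ • d by abel, inner_add_right,
    real_inner_smul_right] at htan
  rw [real_inner_smul_right, norm_smul, mul_pow, Real.norm_eq_abs, sq_abs] at hdesc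
  have hcoef : L / 2 * ((-L⁻¹) ^ 2 * ‖d‖ ^ 2) = 1 / (2 * L) * ‖d‖ ^ 2 := by
    field_simp
  linarith

theorem ConvexOn.cocoercive_gradient (hg : ConvexOn ℝ Set.univ g) (hL : 0 < L)
    (hgrad : ∀ x, HasGradientAt g (g' x) x) (hLip : ∀ x y, ‖g' x - g' y‖ ≤ L * ‖x - y‖) :
    Cocoercive (1 / L) g' := by
  intro x y
  have hxy := hg.add_inner_gradient_add_sq_le hL hgrad hLip x y
  have hyx := hg.add_inner_gradient_add_sq_le hL hgrad hLip y x
  rw [norm_sub_rev, ← neg_sub x y, inner_neg_right] at hyx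
  rw [inner_sub_left]
  have : 1 / L * ‖g' x - g' y‖ ^ 2 = 2 * (1 / (2 * L) * ‖g' x - g' y‖ ^ 2) := by
    field_simp
  linarith

end BaillonHaddad

/-- Proposition 1: for a nonexpansive prior `D`, the operator
`G = ∇g + τ(I − D)` is `(1/(L+2τ))`-cocoercive. -/
theorem G_cocoercive {n : ℕ}
    (g : EuclideanSpace ℝ (Fin n) → ℝ)
    (g' D G : EuclideanSpace ℝ (Fin n) → EuclideanSpace ℝ (Fin n))
    (L τ : ℝ)
    (hL : 0 < L)
    (hgconv : ConvexOn ℝ Set.univ g)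
    (hgrad : ∀ x, HasGradientAt g (g' x) x)
    (hgLip : ∀ x y, ‖g' x - g' y‖ ≤ L * ‖x - y‖)
    (hD : ∀ x y, ‖D x - D y‖ ≤ ‖x - y‖)
    (hτ : 0 < τ)
    (hG : ∀ x, G x = g' x + τ • (x - D x)) :
    ∀ x y : EuclideanSpace ℝ (Fin n),
      ⟪G x - G y, x - y⟫ ≥ (1 / (L + 2 * τ)) * ‖G x - G y‖ ^ 2 := by
  have hsum := (hgconv.cocoercive_gradient hL hgrad hgLip).add
    ((cocoercive_id_sub_of_nonexpansive hD).smul hτ.le) (by positivity) (by positivity)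
  have hconst : 1 / L * (1 / 2 / τ) / (1 / L + 1 / 2 / τ) = 1 / (L + 2 * τ) := by
    field_simp
    ring
  have hG' : G = g' + τ • fun x => x - D x := funext hG
  rw [hconst, ← hG'] at hsum
  exact hsum
end
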